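/- Let m = 2p ≥ 2 be an even integer and let Ŵ⁺ be the group with presentation ⟨z, s₀, s₁, s_m | z² = s₀² = s₁² = s_m² = 1, (s₀s₁)² = (s₀s_m)² = (s₁s_m)^m = z, z s_i = s_i z for i ∈ {0,1,m}⟩. Then Ŵ⁺ has exactly 2m + 6 conjugacy classes. -/

import Mathlib

/-- Generators of the double covering of `W = ℤ₂ × D_{2m}`: the central element `z`
and the lifted reflections `s₀`, `s₁`, `s_m`. -/
inductive Gen : Type
  | z | s0 | s1 | sm
deriving DecidableEq

open FreeGroup

/-- Relators of the positive double covering `Ŵ⁺` of `ℤ₂ × D_{2m}` for even `m`: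
`z² = s₀² = s₁² = s_m² = 1`, `(s₀s₁)² = (s₀s_m)² = (s₁s_m)^m = z`,
and `z` commutes with the generators. -/
def relsEvenPos (m : ℕ) : Set (FreeGroup Gen) :=
  { (of Gen.z) ^ 2, (of Gen.s0) ^ 2, (of Gen.s1) ^ 2, (of Gen.sm) ^ 2,
    (of Gen.s0 * of Gen.s1) ^ 2 * (of Gen.z)⁻¹,
    (of Gen.s0 * of Gen.sm) ^ 2 * (of Gen.z)⁻¹,
    (of Gen.s1 * of Gen.sm) ^ m * (of Gen.z)⁻¹,
    of Gen.z * of Gen.s0 * (of Gen.z)⁻¹ * (of Gen.s0)⁻¹,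
    of Gen.z * of Gen.s1 * (of Gen.z)⁻¹ * (of Gen.s1)⁻¹,
    of Gen.z * of Gen.sm * (of Gen.z)⁻¹ * (of Gen.sm)⁻¹ }

/-!
Write `r = sₘ s₁`. The relations give `r ^ (2p) = z` (so `r ^ (4p) = 1`), `r s₀ = s₀ r`, and
conjugation by `s₁` sends `r ↦ r⁻¹` and `s₀ ↦ s₀ z`. Hence every element is `r ^ i s₀ ^ j s₁ ^ k`,
and the map onto the semidirect product `(ℤ/4p × ℤ/2) ⋊ ℤ/2`, with `s₁` acting by
`σ (x, y) = (2p y - x, y)`, is an isomorphism. There `⟨n, 0⟩` is conjugate only to itself and to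
`⟨σ n, 0⟩`, giving `2p + 1` classes on each of the cosets `y = 0` (where `σ` is `x ↦ -x`) and
`y = 1` (where `σ` is `x ↦ 2p - x`), while the elements `⟨(x, y), 1⟩` fall into four classes,
indexed by `y` and the parity of `x`.
-/

theorem Nat.card_conjClasses_eq_of_isConj_iff {G α : Type*} [Group G] (f : G → α)
    (hf : Function.Surjective f) (hconj : ∀ a b, IsConj a b ↔ f a = f b) :
    Nat.card (ConjClasses G) = Nat.card α :=
  Nat.card_congr <| Equiv.ofBijective (Quotient.lift f fun a b => (hconj a b).1)
    ⟨by rintro ⟨a⟩ ⟨b⟩ hab; exact ConjClasses.mk_eq_mk_iff_isConj.2 ((hconj a b).2 hab),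
      fun c => (hf c).imp' ConjClasses.mk fun _ ha => ha⟩

theorem MulEquiv.isConj_apply_iff {G H : Type*} [Group G] [Group H] (e : G ≃* H) {a b : G} :
    IsConj (e a) (e b) ↔ IsConj a b :=
  ⟨fun h => by simpa using e.symm.toMonoidHom.map_isConj h, e.toMonoidHom.map_isConj⟩

theorem MulEquiv.card_conjClasses_eq {G H : Type*} [Group G] [Group H] (e : G ≃* H) :
    Nat.card (ConjClasses G) = Nat.card (ConjClasses H) :=
  Nat.card_conjClasses_eq_of_isConj_iff (ConjClasses.mk ∘ e)
    (ConjClasses.mk_surjective.comp e.surjective) fun a b => by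
      rw [Function.comp_apply, Function.comp_apply, ConjClasses.mk_eq_mk_iff_isConj,
        e.isConj_apply_iff]

theorem ZMod.eq_zero_or_eq_one (t : ZMod 2) : t = 0 ∨ t = 1 := by
  revert t; decide

namespace WposEven

variable (p : ℕ)

attribute [local simp] CharTwo.add_self_eq_zero

lemma four_mul_natCast_self : 4 * (p : ZMod (4 * p)) = 0 := by
  exact_mod_cast ZMod.natCast_self (4 * p)

def shift : ZMod 2 →+ ZMod (4 * p) :=
  ZMod.lift 2 ⟨zmultiplesHom _ (2 * p), by
    simp only [zmultiplesHom_apply, zsmul_eq_mul]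
    linear_combination four_mul_natCast_self p⟩

@[simp] lemma shift_one : shift p 1 = 2 * p :=
  (ZMod.lift_coe 2 _ 1).trans (by simp)

def reflect : ZMod (4 * p) × ZMod 2 →+ ZMod (4 * p) × ZMod 2 where
  toFun n := (shift p n.2 - n.1, n.2)
  map_zero' := by simp
  map_add' a b := by ext <;> simp; abel

@[simp] lemma reflect_apply (x : ZMod (4 * p)) (y : ZMod 2) :
    reflect p (x, y) = (shift p y - x, y) := rfl

lemma reflect_reflect (n : ZMod (4 * p) × ZMod 2) : reflect p (reflect p n) = n := by
  simp [reflect]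

def twist (t : ZMod 2) : ZMod (4 * p) × ZMod 2 →+ ZMod (4 * p) × ZMod 2 :=
  if t = 0 then AddMonoidHom.id _ else reflect p

@[simp] lemma twist_zero (n : ZMod (4 * p) × ZMod 2) : twist p 0 n = n := rfl

@[simp] lemma twist_one (n : ZMod (4 * p) × ZMod 2) : twist p 1 n = reflect p n := rfl

lemma twist_twist (t t' : ZMod 2) (n : ZMod (4 * p) × ZMod 2) :
    twist p t (twist p t' n) = twist p (t + t') n := by
  obtain rfl | rfl := t.eq_zero_or_eq_one <;> obtain rfl | rfl := t'.eq_zero_or_eq_one <;>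
    simp [reflect_reflect]

/-- `⟨(x, y), t⟩` stands for `r ^ x s₀ ^ y s₁ ^ t`. -/
@[ext] structure Model where
  n : ZMod (4 * p) × ZMod 2
  t : ZMod 2

namespace Model

variable {p}

instance : Mul (Model p) := ⟨fun g h => ⟨g.n + twist p g.t h.n, g.t + h.t⟩⟩

instance : One (Model p) := ⟨⟨0, 0⟩⟩

instance : Inv (Model p) := ⟨fun g => ⟨-twist p g.t g.n, g.t⟩⟩

@[simp] lemma mk_mul_mk (n n' : ZMod (4 * p) × ZMod 2) (t t' : ZMod 2) :
    (⟨n, t⟩ : Model p) * ⟨n', t'⟩ = ⟨n + twist p t n', t + t'⟩ := rfl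

@[simp] lemma one_def : (1 : Model p) = ⟨0, 0⟩ := rfl

@[simp] lemma inv_mk (n : ZMod (4 * p) × ZMod 2) (t : ZMod 2) :
    (⟨n, t⟩ : Model p)⁻¹ = ⟨-twist p t n, t⟩ := rfl

instance : Group (Model p) where
  mul_assoc := by
    rintro ⟨a, s⟩ ⟨b, t⟩ ⟨c, u⟩
    ext : 1 <;> simp [twist_twist, add_assoc]
  one_mul := by rintro ⟨a, s⟩; simp
  mul_one := by rintro ⟨a, s⟩; simp
  inv_mul_cancel := by rintro ⟨a, s⟩; simp

variable (p) in
def translation : Multiplicative (ZMod (4 * p) × ZMod 2) →* Model p where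
  toFun n := ⟨n.toAdd, 0⟩
  map_one' := rfl
  map_mul' _ _ := rfl

lemma mk_zero_pow (n : ZMod (4 * p) × ZMod 2) (k : ℕ) :
    (⟨n, 0⟩ : Model p) ^ k = ⟨k • n, 0⟩ :=
  (map_pow (translation p) (.ofAdd n) k).symm

lemma mk_zero_zpow (n : ZMod (4 * p) × ZMod 2) (i : ℤ) :
    (⟨n, 0⟩ : Model p) ^ i = ⟨i • n, 0⟩ :=
  (map_zpow (translation p) (.ofAdd n) i).symm

end Model

section Conjugacy

def parity : ZMod (4 * p) →+* ZMod 2 := ZMod.castHom ⟨2 * p, by ring⟩ (ZMod 2)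

lemma parity_shift (y : ZMod 2) : parity p (shift p y) = 0 := by
  obtain rfl | rfl := y.eq_zero_or_eq_one <;> simp [map_ofNat, CharTwo.two_eq_zero]

lemma exists_eq_two_mul_of_parity_eq_zero [NeZero p] {d : ZMod (4 * p)} (h : parity p d = 0) :
    ∃ a, d = 2 * a := by
  rw [← ZMod.natCast_zmod_val d, map_natCast, ZMod.natCast_eq_zero_iff] at h
  obtain ⟨k, hk⟩ := h
  exact ⟨k, by rw [← ZMod.natCast_zmod_val d, hk]; push_cast; ring⟩

namespace Model

variable {p}

lemma mul_mul_inv (u g : Model p) :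
    u * g * u⁻¹ = ⟨u.n - twist p g.t u.n + twist p u.t g.n, g.t⟩ := by
  obtain ⟨a, s⟩ := u
  obtain ⟨b, t⟩ := g
  have hst : s + t + s = t := by
    rw [add_comm s t, add_assoc, CharTwo.add_self_eq_zero, add_zero]
  ext : 1
  · change a + twist p s b + twist p (s + t) (-twist p s a) = a - twist p t a + twist p s b
    rw [map_neg, twist_twist, hst]
    abel
  · exact hst

lemma t_eq_of_isConj {g h : Model p} (hgh : IsConj g h) : g.t = h.t := by
  obtain ⟨u, rfl⟩ := isConj_iff.1 hgh
  rw [mul_mul_inv]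

lemma isConj_mk_zero_iff (n n' : ZMod (4 * p) × ZMod 2) :
    IsConj (⟨n, 0⟩ : Model p) ⟨n', 0⟩ ↔ n' = n ∨ n' = reflect p n := by
  rw [isConj_iff]
  constructor
  · rintro ⟨⟨a, s⟩, hu⟩
    rw [mul_mul_inv, Model.mk.injEq] at hu
    obtain rfl | rfl := s.eq_zero_or_eq_one <;> simp_all
  · rintro (rfl | rfl)
    · exact ⟨1, by simp⟩
    · exact ⟨⟨0, 1⟩, by rw [mul_mul_inv]; simp⟩

lemma isConj_mk_one_iff [NeZero p] (x x' : ZMod (4 * p)) (y y' : ZMod 2) :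
    IsConj (⟨(x, y), 1⟩ : Model p) ⟨(x', y'), 1⟩ ↔ y' = y ∧ parity p x' = parity p x := by
  rw [isConj_iff]
  constructor
  · rintro ⟨⟨⟨a, b⟩, s⟩, hu⟩
    rw [mul_mul_inv, Model.mk.injEq, Prod.ext_iff] at hu
    obtain rfl | rfl := s.eq_zero_or_eq_one <;>
      simp only [twist_zero, twist_one, reflect_apply, Prod.fst_sub, Prod.snd_sub, Prod.fst_add,
        Prod.snd_add] at hu <;>
      obtain ⟨⟨rfl, rfl⟩, -⟩ := hu <;>
      refine ⟨by abel, ?_⟩ <;>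
      simp only [map_add, map_sub, parity_shift]
    · linear_combination (parity p a) * CharTwo.two_eq_zero (R := ZMod 2)
    · linear_combination (parity p a - parity p x) * CharTwo.two_eq_zero (R := ZMod 2)
  · rintro ⟨rfl, hx⟩
    obtain ⟨a, ha⟩ := exists_eq_two_mul_of_parity_eq_zero p (d := x' - x) (by simp [hx])
    refine ⟨⟨(a, 0), 0⟩, ?_⟩
    rw [mul_mul_inv]
    simp only [twist_one, reflect_apply, map_zero, zero_sub, Prod.mk_sub_mk, sub_neg_eq_add,
      sub_self, twist_zero, Prod.mk_add_mk, zero_add, mk.injEq, Prod.mk.injEq, and_true]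
    linear_combination -ha

end Model

variable [NeZero p]

def absFin (x : ZMod (4 * p)) : Fin (2 * p + 1) :=
  ⟨x.valMinAbs.natAbs, by have := x.natAbs_valMinAbs_le; omega⟩

lemma absFin_eq_absFin_iff {x x' : ZMod (4 * p)} :
    absFin p x = absFin p x' ↔ x = x' ∨ x = -x' :=
  Fin.ext_iff.trans ZMod.natAbs_valMinAbs_eq_natAbs_valMinAbs

lemma absFin_natCast (k : Fin (2 * p + 1)) : absFin p (k : ℕ) = k :=
  Fin.ext <| by
    simp [absFin, ZMod.valMinAbs_natCast_of_le_half (show (k : ℕ) ≤ 4 * p / 2 by omega)]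

/-- On the coset `y = 1` the reflection `x ↦ 2p - x` is negation about `p`, whence the shift
by `p` in the second summand. -/
def conjInvariant (g : Model p) : (Fin (2 * p + 1) ⊕ Fin (2 * p + 1)) ⊕ ZMod 2 × ZMod 2 :=
  if g.t = 0 then
    .inl (if g.n.2 = 0 then .inl (absFin p g.n.1) else .inr (absFin p (g.n.1 - p)))
  else .inr (parity p g.n.1, g.n.2)

lemma conjInvariant_surjective : Function.Surjective (conjInvariant p) := by
  rintro ((k | k) | ⟨a, y⟩)
  · exact ⟨⟨((k : ℕ), 0), 0⟩, by simp [conjInvariant, absFin_natCast]⟩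
  · exact ⟨⟨((k : ℕ) + p, 1), 0⟩, by simp [conjInvariant, absFin_natCast]⟩
  · exact ⟨⟨((a.val : ℕ), y), 1⟩, by simp [conjInvariant]⟩

lemma isConj_iff_conjInvariant_eq (g h : Model p) :
    IsConj g h ↔ conjInvariant p g = conjInvariant p h := by
  obtain ⟨⟨x, y⟩, t⟩ := g
  obtain ⟨⟨x', y'⟩, t'⟩ := h
  obtain rfl | rfl := t.eq_zero_or_eq_one <;> obtain rfl | rfl := t'.eq_zero_or_eq_one
  · rw [Model.isConj_mk_zero_iff]
    obtain rfl | rfl := y.eq_zero_or_eq_one <;> obtain rfl | rfl := y'.eq_zero_or_eq_one <;>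
      simp [conjInvariant, absFin_eq_absFin_iff]
    · exact or_congr eq_comm ⟨fun h => by rw [h, neg_neg], fun h => by rw [h, neg_neg]⟩
    · exact or_congr eq_comm
        ⟨fun h => by rw [h]; ring, fun h => by linear_combination h⟩
  · exact iff_of_false (fun h => by simpa using Model.t_eq_of_isConj h) (by simp [conjInvariant])
  · exact iff_of_false (fun h => by simpa using Model.t_eq_of_isConj h) (by simp [conjInvariant])
  · rw [Model.isConj_mk_one_iff]
    simp [conjInvariant, eq_comm, and_comm]

lemma card_conjClasses_model : Nat.card (ConjClasses (Model p)) = 4 * p + 6 := by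
  rw [Nat.card_conjClasses_eq_of_isConj_iff _ (conjInvariant_surjective p)
    (isConj_iff_conjInvariant_eq p)]
  simp
  ring

end Conjugacy

abbrev Pres := PresentedGroup (relsEvenPos (2 * p))

namespace Pres

variable {p}

def z : Pres p := PresentedGroup.of Gen.z
def s₀ : Pres p := PresentedGroup.of Gen.s0
def s₁ : Pres p := PresentedGroup.of Gen.s1
def sₘ : Pres p := PresentedGroup.of Gen.sm
def r : Pres p := sₘ * s₁

lemma z_sq : (z : Pres p) ^ 2 = 1 := PresentedGroup.one_of_mem (by simp [relsEvenPos])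
lemma s₀_sq : (s₀ : Pres p) ^ 2 = 1 := PresentedGroup.one_of_mem (by simp [relsEvenPos])
lemma s₁_sq : (s₁ : Pres p) ^ 2 = 1 := PresentedGroup.one_of_mem (by simp [relsEvenPos])
lemma sₘ_sq : (sₘ : Pres p) ^ 2 = 1 := PresentedGroup.one_of_mem (by simp [relsEvenPos])

lemma s₀_mul_s₁_sq : (s₀ * s₁ : Pres p) ^ 2 = z :=
  mul_inv_eq_one.1 (PresentedGroup.one_of_mem (by simp [relsEvenPos]))
lemma s₀_mul_sₘ_sq : (s₀ * sₘ : Pres p) ^ 2 = z :=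
  mul_inv_eq_one.1 (PresentedGroup.one_of_mem (by simp [relsEvenPos]))
lemma s₁_mul_sₘ_pow : (s₁ * sₘ : Pres p) ^ (2 * p) = z :=
  mul_inv_eq_one.1 (PresentedGroup.one_of_mem (by simp [relsEvenPos]))

lemma commute_z_s₀ : Commute (z : Pres p) s₀ :=
  commutatorElement_eq_one_iff_commute.1 (PresentedGroup.one_of_mem (by simp [relsEvenPos]))
lemma commute_z_sₘ : Commute (z : Pres p) sₘ :=
  commutatorElement_eq_one_iff_commute.1 (PresentedGroup.one_of_mem (by simp [relsEvenPos]))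

lemma inv_z : (z : Pres p)⁻¹ = z := inv_eq_of_mul_eq_one_right (by rw [← sq, z_sq])
lemma inv_s₀ : (s₀ : Pres p)⁻¹ = s₀ := inv_eq_of_mul_eq_one_right (by rw [← sq, s₀_sq])
lemma inv_s₁ : (s₁ : Pres p)⁻¹ = s₁ := inv_eq_of_mul_eq_one_right (by rw [← sq, s₁_sq])
lemma inv_sₘ : (sₘ : Pres p)⁻¹ = sₘ := inv_eq_of_mul_eq_one_right (by rw [← sq, sₘ_sq])

lemma s₁_mul_s₀ : (s₁ * s₀ : Pres p) = s₀ * z * s₁ :=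
  calc (s₁ * s₀ : Pres p) = s₀⁻¹ * (s₀ * s₁) ^ 2 * s₁⁻¹ := by rw [sq]; group
    _ = s₀ * z * s₁ := by rw [s₀_mul_s₁_sq, inv_s₀, inv_s₁]

lemma sₘ_mul_s₀ : (sₘ * s₀ : Pres p) = s₀ * z * sₘ :=
  calc (sₘ * s₀ : Pres p) = s₀⁻¹ * (s₀ * sₘ) ^ 2 * sₘ⁻¹ := by rw [sq]; group
    _ = s₀ * z * sₘ := by rw [s₀_mul_sₘ_sq, inv_s₀, inv_sₘ]

lemma commute_r_s₀ : Commute (r : Pres p) s₀ :=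
  calc (r * s₀ : Pres p) = sₘ * (s₁ * s₀) := mul_assoc _ _ _
    _ = sₘ * s₀ * z * s₁ := by rw [s₁_mul_s₀]; simp only [mul_assoc]
    _ = s₀ * z * (sₘ * z) * s₁ := by rw [sₘ_mul_s₀]; simp only [mul_assoc]
    _ = s₀ * (z * z) * sₘ * s₁ := by rw [← commute_z_sₘ.eq]; simp only [mul_assoc]
    _ = s₀ * r := by rw [← sq, z_sq, mul_one, r, mul_assoc]

lemma r_pow_two_mul : (r : Pres p) ^ (2 * p) = z :=
  calc (r : Pres p) ^ (2 * p) = (sₘ * (s₁ * sₘ) * sₘ⁻¹) ^ (2 * p) := by rw [r]; group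
    _ = z := by rw [conj_pow, s₁_mul_sₘ_pow, ← commute_z_sₘ.eq, mul_inv_cancel_right]

lemma r_pow_four_mul : (r : Pres p) ^ (4 * p) = 1 := by
  rw [show 4 * p = 2 * p * 2 by ring, pow_mul, r_pow_two_mul, z_sq]

lemma s₁_mul_r : (s₁ * r : Pres p) = r⁻¹ * s₁ := by
  rw [r, mul_inv_rev, inv_s₁, inv_sₘ, mul_assoc]

lemma sₘ_eq : (sₘ : Pres p) = r * s₁ := by
  rw [r, mul_assoc, ← sq, s₁_sq, mul_one]

lemma s₁_mul_zpow_r (n : ℤ) : (s₁ * r ^ n : Pres p) = r ^ (-n) * s₁ := by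
  rw [(SemiconjBy.zpow_right s₁_mul_r n).eq, inv_zpow', zpow_neg]

def normalForms : Set (Pres p) :=
  {w | ∃ (i : ℤ) (j : ℕ), w = r ^ i * s₀ ^ j ∨ w = r ^ i * s₀ ^ j * s₁}

lemma mul_zpow_r_mem {w : Pres p} (hw : w ∈ normalForms) (n : ℤ) :
    w * r ^ n ∈ normalForms := by
  obtain ⟨i, j, rfl | rfl⟩ := hw
  · refine ⟨i + n, j, Or.inl ?_⟩
    rw [mul_assoc, ← ((commute_r_s₀.zpow_left n).pow_right j).eq, ← mul_assoc, zpow_add]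
  · refine ⟨i - n, j, Or.inr ?_⟩
    rw [mul_assoc, s₁_mul_zpow_r, ← mul_assoc, mul_assoc (r ^ i),
      ← ((commute_r_s₀.zpow_left (-n)).pow_right j).eq, ← mul_assoc, ← zpow_add, sub_eq_add_neg]

lemma mul_s₀_mem {w : Pres p} (hw : w ∈ normalForms) : w * s₀ ∈ normalForms := by
  obtain ⟨i, j, rfl | rfl⟩ := hw
  · exact ⟨i, j + 1, Or.inl (by rw [mul_assoc, pow_succ])⟩
  · refine ⟨i + (2 * p : ℕ), j + 1, Or.inr ?_⟩
    rw [mul_assoc, s₁_mul_s₀, zpow_add, zpow_natCast, r_pow_two_mul, mul_assoc (r ^ i) z,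
      (commute_z_s₀.pow_right (j + 1)).eq, pow_succ]
    simp only [mul_assoc]

lemma mul_s₁_mem {w : Pres p} (hw : w ∈ normalForms) : w * s₁ ∈ normalForms := by
  obtain ⟨i, j, rfl | rfl⟩ := hw
  · exact ⟨i, j, Or.inr rfl⟩
  · exact ⟨i, j, Or.inl (by rw [mul_assoc, ← sq, s₁_sq, mul_one])⟩

lemma inv_of (γ : Gen) : (PresentedGroup.of γ : Pres p)⁻¹ = PresentedGroup.of γ := by
  cases γ
  exacts [inv_z, inv_s₀, inv_s₁, inv_sₘ]

lemma mul_of_mem (γ : Gen) {w : Pres p} (hw : w ∈ normalForms) :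
    w * PresentedGroup.of γ ∈ normalForms := by
  cases γ
  · change w * z ∈ _
    rw [← r_pow_two_mul, ← zpow_natCast]
    exact mul_zpow_r_mem hw _
  · exact mul_s₀_mem hw
  · exact mul_s₁_mem hw
  · change w * sₘ ∈ _
    rw [sₘ_eq, ← mul_assoc]
    exact mul_s₁_mem (by simpa using mul_zpow_r_mem hw 1)

lemma mem_normalForms (w : Pres p) : w ∈ normalForms := by
  have hw : w ∈ Subgroup.closure (Set.range PresentedGroup.of) := by
    rw [PresentedGroup.closure_range_of]; trivial
  induction hw using Subgroup.closure_induction_right with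
  | one => exact ⟨0, 0, Or.inl (by simp)⟩
  | mul_right x _ y hy hx =>
    obtain ⟨γ, rfl⟩ := hy
    exact mul_of_mem γ hx
  | mul_inv_cancel x _ y hy hx =>
    obtain ⟨γ, rfl⟩ := hy
    rw [inv_of]
    exact mul_of_mem γ hx

end Pres

section Presentation

open Pres

def genImage : Gen → Model p
  | .z => ⟨(2 * p, 0), 0⟩
  | .s0 => ⟨(0, 1), 0⟩
  | .s1 => ⟨0, 1⟩
  | .sm => ⟨(1, 0), 1⟩

open scoped commutatorElement in
lemma genImage_rels : ∀ w ∈ relsEvenPos (2 * p), FreeGroup.lift (genImage p) w = 1 := by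
  have hneg : -(2 * (p : ZMod (4 * p))) = 2 * p := by
    linear_combination -four_mul_natCast_self p
  intro w hw
  simp only [relsEvenPos, Set.mem_insert_iff, Set.mem_singleton_iff] at hw
  rcases hw with rfl | rfl | rfl | rfl | rfl | rfl | rfl | rfl | rfl | rfl <;>
    simp [genImage, sq, Model.mk_zero_pow, hneg] <;>
    linear_combination four_mul_natCast_self p

def toModel : Pres p →* Model p := PresentedGroup.toGroup (genImage_rels p)

lemma toModel_zpow_r_mul_pow_s₀ (i : ℤ) (j : ℕ) :
    toModel p (r ^ i * s₀ ^ j) = ⟨(i, j), 0⟩ := by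
  have hr : toModel p r = ⟨(1, 0), 0⟩ := by
    simp [toModel, r, sₘ, s₁, genImage]
  have hs₀ : toModel p s₀ = ⟨(0, 1), 0⟩ := PresentedGroup.toGroup.of _
  simp [hr, hs₀, Model.mk_zero_pow, Model.mk_zero_zpow]

lemma toModel_s₁ : toModel p s₁ = ⟨0, 1⟩ := PresentedGroup.toGroup.of _

lemma toModel_injective [NeZero p] : Function.Injective (toModel p) := by
  rw [injective_iff_map_eq_one]
  intro w hw
  obtain ⟨i, j, rfl | rfl⟩ := mem_normalForms w
  · simp only [toModel_zpow_r_mul_pow_s₀, Model.one_def, Model.mk.injEq, Prod.mk_eq_zero,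
      and_true, ZMod.intCast_zmod_eq_zero_iff_dvd, ZMod.natCast_eq_zero_iff] at hw
    obtain ⟨hi, hj⟩ := hw
    have hr : (r : Pres p) ^ i = 1 := orderOf_dvd_iff_zpow_eq_one.1 <|
      (Int.natCast_dvd_natCast.2 (orderOf_dvd_of_pow_eq_one r_pow_four_mul)).trans hi
    have hs₀ : (s₀ : Pres p) ^ j = 1 := orderOf_dvd_iff_pow_eq_one.1 <|
      (orderOf_dvd_of_pow_eq_one s₀_sq).trans hj
    rw [hr, hs₀, one_mul]
  · simp [toModel_zpow_r_mul_pow_s₀, toModel_s₁] at hw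

lemma toModel_surjective [NeZero p] : Function.Surjective (toModel p) := by
  rintro ⟨⟨x, y⟩, t⟩
  obtain rfl | rfl := t.eq_zero_or_eq_one
  · exact ⟨r ^ (x.val : ℤ) * s₀ ^ y.val, by simp [toModel_zpow_r_mul_pow_s₀]⟩
  · exact ⟨r ^ (x.val : ℤ) * s₀ ^ y.val * s₁,
      by simp [toModel_zpow_r_mul_pow_s₀, toModel_s₁]⟩

noncomputable def mulEquivModel [NeZero p] : Pres p ≃* Model p :=
  MulEquiv.ofBijective (toModel p) ⟨toModel_injective p, toModel_surjective p⟩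

end Presentation

end WposEven

/-- For even `m = 2p ≥ 2`, the positive double covering `Ŵ⁺` of `ℤ₂ × D_{2m}`
has exactly `2m + 6` conjugacy classes. -/
theorem WposEven_conjClasses (m p : ℕ) (hp : 1 ≤ p) (hm : m = 2 * p) :
    Nat.card (ConjClasses (PresentedGroup (relsEvenPos m))) = 2 * m + 6 := by
  subst hm
  have : NeZero p := ⟨by omega⟩
  rw [(WposEven.mulEquivModel p).card_conjClasses_eq, WposEven.card_conjClasses_model]
  ring
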